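/- Let (x₁,x₂,x₃) → (x̄₁, x̄₂, x̄₃) be a convergent sequence in A with limit on the boundary ∂A satisfying e^{x̄₁} = e^{x̄₂} + e^{x̄₃}. Then the angles of the triangle with sides (e^{x₁}, e^{x₂}, e^{x₃}) converge: (α₁, α₂, α₃) → (π, 0, 0), and consequently f(x₁,x₂,x₃) → π·x̄₁. -/

import Mathlib

open Real

/-- Milnor's Lobachevsky function Л(α) = −∫₀^α log|2 sin t| dt. -/
noncomputable def Lob (α : ℝ) : ℝ := -∫ t in (0:ℝ)..α, Real.log (2 * Real.sin t)

/-- The domain A where the triangle inequalities hold for (e^{x₁}, e^{x₂}, e^{x₃}). -/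
def triA : Set (ℝ × ℝ × ℝ) :=
  {x | Real.exp x.1 < Real.exp x.2.1 + Real.exp x.2.2 ∧
       Real.exp x.2.1 < Real.exp x.2.2 + Real.exp x.1 ∧
       Real.exp x.2.2 < Real.exp x.1 + Real.exp x.2.1}

/-- The angle opposite the side of length e^{x₁} (law of cosines). -/
noncomputable def ang1 (x : ℝ × ℝ × ℝ) : ℝ :=
  Real.arccos ((Real.exp (2*x.2.1) + Real.exp (2*x.2.2) - Real.exp (2*x.1)) /
    (2 * Real.exp x.2.1 * Real.exp x.2.2))

/-- The angle opposite the side of length e^{x₂}. -/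
noncomputable def ang2 (x : ℝ × ℝ × ℝ) : ℝ :=
  Real.arccos ((Real.exp (2*x.2.2) + Real.exp (2*x.1) - Real.exp (2*x.2.1)) /
    (2 * Real.exp x.2.2 * Real.exp x.1))

/-- The angle opposite the side of length e^{x₃}. -/
noncomputable def ang3 (x : ℝ × ℝ × ℝ) : ℝ :=
  Real.arccos ((Real.exp (2*x.1) + Real.exp (2*x.2.1) - Real.exp (2*x.2.2)) /
    (2 * Real.exp x.1 * Real.exp x.2.1))

/-- The triangle function f(x₁,x₂,x₃) = Σ αᵢxᵢ + Σ Л(αᵢ). -/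
noncomputable def fTri (x : ℝ × ℝ × ℝ) : ℝ :=
  ang1 x * x.1 + ang2 x * x.2.1 + ang3 x * x.2.2 +
    Lob (ang1 x) + Lob (ang2 x) + Lob (ang3 x)

/-!
The law-of-cosines formulas, `Л` and hence `f` are continuous on all of `ℝ³` (`arccos` is
defined everywhere, and `log (2 sin)` is locally integrable since `sin` is analytic). So the
limits are simply the values at the boundary point: there `e^{x̄₁} = e^{x̄₂} + e^{x̄₃}` makes the
cosines `-1, 1, 1`, and `Л(0) = Л(π) = 0` because `∫₀^π log (sin t) dt = -π log 2`.
-/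

open Filter MeasureTheory

theorem intervalIntegrable_log_two_mul_sin (a b : ℝ) :
    IntervalIntegrable (fun t => log (2 * sin t)) volume a b :=
  (analyticOnNhd_const.mul analyticOnNhd_sin).meromorphicOn.intervalIntegrable_log

theorem continuous_Lob : Continuous Lob :=
  (intervalIntegral.continuous_primitive intervalIntegrable_log_two_mul_sin 0).neg

theorem Lob_zero : Lob 0 = 0 := by simp [Lob]

theorem Lob_pi : Lob π = 0 := by
  have hsplit : (fun t => log (2 * sin t)) =ᶠ[codiscreteWithin (Set.uIoc 0 π)]
      fun t => log 2 + log (sin t) := by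
    have hsin : sin ⁻¹' {0}ᶜ ∈ codiscrete ℝ :=
      analyticOnNhd_sin.preimage_zero_mem_codiscrete (x := π / 2) (by simp)
    filter_upwards [codiscreteWithin_mono (Set.subset_univ _) hsin] with t ht
    exact log_mul two_ne_zero ht
  rw [Lob, intervalIntegral.integral_congr_codiscreteWithin hsplit,
    intervalIntegral.integral_add intervalIntegrable_const
      (g := fun t => log (sin t)) intervalIntegrable_log_sin,
    integral_log_sin_zero_pi, intervalIntegral.integral_const, smul_eq_mul]
  ring

theorem exp_two_mul_eq_sq (y : ℝ) : exp (2 * y) = exp y ^ 2 := by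
  rw [sq, ← exp_add, two_mul]

theorem continuous_ang1 : Continuous ang1 :=
  continuous_arccos.comp ((by fun_prop : Continuous _).div (by fun_prop) fun _ => by positivity)

theorem ang2_eq_ang1 (x : ℝ × ℝ × ℝ) : ang2 x = ang1 (x.2.1, x.2.2, x.1) := rfl

theorem ang3_eq_ang1 (x : ℝ × ℝ × ℝ) : ang3 x = ang1 (x.2.2, x.1, x.2.1) := rfl

theorem continuous_ang2 : Continuous ang2 := by
  simp only [funext ang2_eq_ang1]
  exact continuous_ang1.comp (by fun_prop)

theorem continuous_ang3 : Continuous ang3 := by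
  simp only [funext ang3_eq_ang1]
  exact continuous_ang1.comp (by fun_prop)

theorem continuous_fTri : Continuous fTri := by
  have := continuous_ang1; have := continuous_ang2; have := continuous_ang3
  have := continuous_Lob
  unfold fTri
  fun_prop

section Degenerate

variable {x : ℝ × ℝ × ℝ}

theorem ang1_eq_pi_of_exp_eq_add (h : exp x.1 = exp x.2.1 + exp x.2.2) : ang1 x = π := by
  have hcos : (exp x.2.1 ^ 2 + exp x.2.2 ^ 2 - (exp x.2.1 + exp x.2.2) ^ 2) /
      (2 * exp x.2.1 * exp x.2.2) = -1 := by
    field_simp; ring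
  rw [ang1, exp_two_mul_eq_sq, exp_two_mul_eq_sq, exp_two_mul_eq_sq, h, hcos, arccos_neg_one]

theorem ang2_eq_zero_of_exp_eq_add (h : exp x.1 = exp x.2.1 + exp x.2.2) : ang2 x = 0 := by
  have hcos : (exp x.2.2 ^ 2 + (exp x.2.1 + exp x.2.2) ^ 2 - exp x.2.1 ^ 2) /
      (2 * exp x.2.2 * (exp x.2.1 + exp x.2.2)) = 1 := by
    field_simp; ring
  rw [ang2, exp_two_mul_eq_sq, exp_two_mul_eq_sq, exp_two_mul_eq_sq, h, hcos, arccos_one]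

theorem ang3_eq_zero_of_exp_eq_add (h : exp x.1 = exp x.2.1 + exp x.2.2) : ang3 x = 0 := by
  have hcos : ((exp x.2.1 + exp x.2.2) ^ 2 + exp x.2.1 ^ 2 - exp x.2.2 ^ 2) /
      (2 * (exp x.2.1 + exp x.2.2) * exp x.2.1) = 1 := by
    field_simp; ring
  rw [ang3, exp_two_mul_eq_sq, exp_two_mul_eq_sq, exp_two_mul_eq_sq, h, hcos, arccos_one]

theorem fTri_eq_pi_mul_of_exp_eq_add (h : exp x.1 = exp x.2.1 + exp x.2.2) : fTri x = π * x.1 := by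
  rw [fTri, ang1_eq_pi_of_exp_eq_add h, ang2_eq_zero_of_exp_eq_add h,
    ang3_eq_zero_of_exp_eq_add h, Lob_pi, Lob_zero]
  ring

end Degenerate

theorem fTri_boundary_limit_general (x : ℕ → ℝ × ℝ × ℝ) (xb : ℝ × ℝ × ℝ)
    (hlim : Tendsto x atTop (nhds xb))
    (hbd : Real.exp xb.1 = Real.exp xb.2.1 + Real.exp xb.2.2) :
    Tendsto (fun n => ang1 (x n)) atTop (nhds Real.pi) ∧
    Tendsto (fun n => ang2 (x n)) atTop (nhds 0) ∧
    Tendsto (fun n => ang3 (x n)) atTop (nhds 0) ∧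
    Tendsto (fun n => fTri (x n)) atTop (nhds (Real.pi * xb.1)) :=
  ⟨(continuous_ang1.tendsto' xb _ (ang1_eq_pi_of_exp_eq_add hbd)).comp hlim,
    (continuous_ang2.tendsto' xb _ (ang2_eq_zero_of_exp_eq_add hbd)).comp hlim,
    (continuous_ang3.tendsto' xb _ (ang3_eq_zero_of_exp_eq_add hbd)).comp hlim,
    (continuous_fTri.tendsto' xb _ (fTri_eq_pi_mul_of_exp_eq_add hbd)).comp hlim⟩

/-- Limit (b) in the proof of Lemma 6.9: as (x₁,x₂,x₃) → (x̄₁,x̄₂,x̄₃) ∈ ∂A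
with e^{x̄₁} = e^{x̄₂} + e^{x̄₃}, the angles tend to (π,0,0) and f → π x̄₁. -/
theorem fTri_boundary_limit (x : ℕ → ℝ × ℝ × ℝ) (xb : ℝ × ℝ × ℝ)
    (hA : ∀ n, x n ∈ triA)
    (hlim : Tendsto x atTop (nhds xb))
    (hbd : Real.exp xb.1 = Real.exp xb.2.1 + Real.exp xb.2.2) :
    Tendsto (fun n => ang1 (x n)) atTop (nhds Real.pi) ∧
    Tendsto (fun n => ang2 (x n)) atTop (nhds 0) ∧
    Tendsto (fun n => ang3 (x n)) atTop (nhds 0) ∧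
    Tendsto (fun n => fTri (x n)) atTop (nhds (Real.pi * xb.1)) :=
  fTri_boundary_limit_general x xb hlim hbd
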